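/- Let H ∈ ℝ^{d×d} be symmetric positive definite, g ∈ ℝ^d, θ_t ∈ ℝ^d, and S ⊆ [d]. The minimizer of θ ↦ ⟨g, θ − θ_t⟩ + (1/2)⟨θ − θ_t, H(θ − θ_t)⟩ over {θ : θ_i = 0 for i ∈ S} is θ*_S = (I − H^{-1} H^S)(θ_t − H^{-1} g), where H^S = I_S^⊤ (I_S H^{-1} I_S^⊤)^{-1} I_S. -/

import Mathlib

open Matrix Finset

/-- The selection matrix `I_S ∈ ℝ^{|S|×d}` whose rows are the standard basis vectors
`eᵢᵀ` for `i ∈ S`. -/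
def selMat {d : ℕ} (S : Finset (Fin d)) : Matrix {i // i ∈ S} (Fin d) ℝ :=
  Matrix.of fun i j => if (i : Fin d) = j then (1 : ℝ) else 0

/-- The matrix `H^S = I_Sᵀ (I_S H⁻¹ I_Sᵀ)⁻¹ I_S`. -/
noncomputable def HmatS {d : ℕ} (H : Matrix (Fin d) (Fin d) ℝ) (S : Finset (Fin d)) :
    Matrix (Fin d) (Fin d) ℝ :=
  (selMat S)ᵀ * (selMat S * H⁻¹ * (selMat S)ᵀ)⁻¹ * selMat S

/-- The diagonal projection matrix `E_S` onto the coordinates in `S`. -/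
def projMat {d : ℕ} (S : Finset (Fin d)) : Matrix (Fin d) (Fin d) ℝ :=
  Matrix.diagonal fun i => if i ∈ S then (1 : ℝ) else 0

/-!
Write `q(x) = ⟨g, x⟩ + ½⟨x, Hx⟩` and `A = I_S`. The constraint set is `{θ : Aθ = 0}`, and
`A H⁻¹ H^S = A` shows that `θ*_S` lies in it. At `θ*_S` the gradient `g + H(θ*_S − θ_t)` equals
`−H^S(θ_t − H⁻¹g)`, which lies in the range of `Aᵀ` and is therefore orthogonal to every feasible
direction `δ` (those with `Aδ = 0`). For a symmetric `H`,
`q(x + δ) = q(x) + ⟨g + Hx, δ⟩ + ½⟨δ, Hδ⟩`, so positive definiteness makes `θ*_S` the strict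
minimizer.
-/

namespace Matrix

variable {n : Type*} [Fintype n]

theorem IsSymm.dotProduct_mulVec_comm {R : Type*} [CommSemiring R] {H : Matrix n n R}
    (hH : H.IsSymm) (a b : n → R) : a ⬝ᵥ H *ᵥ b = b ⬝ᵥ H *ᵥ a := by
  rw [dotProduct_mulVec, dotProduct_comm, ← mulVec_transpose, hH.eq]

theorem IsSymm.quadratic_add {H : Matrix n n ℝ} (hH : H.IsSymm) (g x δ : n → ℝ) :
    g ⬝ᵥ (x + δ) + 1 / 2 * ((x + δ) ⬝ᵥ H *ᵥ (x + δ)) =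
      g ⬝ᵥ x + 1 / 2 * (x ⬝ᵥ H *ᵥ x) + (g + H *ᵥ x) ⬝ᵥ δ + 1 / 2 * (δ ⬝ᵥ H *ᵥ δ) := by
  simp only [dotProduct_add, add_dotProduct, mulVec_add]
  rw [dotProduct_comm (H *ᵥ x) δ, hH.dotProduct_mulVec_comm δ x]
  ring

theorem PosDef.quadratic_lt_add {H : Matrix n n ℝ} (hH : H.PosDef) {g x δ : n → ℝ}
    (hδ : δ ≠ 0) (horth : (g + H *ᵥ x) ⬝ᵥ δ = 0) :
    g ⬝ᵥ x + 1 / 2 * (x ⬝ᵥ H *ᵥ x) < g ⬝ᵥ (x + δ) + 1 / 2 * ((x + δ) ⬝ᵥ H *ᵥ (x + δ)) := by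
  have hpos : 0 < δ ⬝ᵥ H *ᵥ δ := by simpa using hH.dotProduct_mulVec_pos hδ
  rw [(isHermitian_iff_isSymm.1 hH.isHermitian).quadratic_add, horth]
  linarith

theorem add_mulVec_one_sub_inv_mul_mulVec_sub {R : Type*} [CommRing R] [DecidableEq n]
    {H : Matrix n n R} (hH : IsUnit H.det) (P : Matrix n n R) (g θt : n → R) :
    g + H *ᵥ ((1 - H⁻¹ * P) *ᵥ (θt - H⁻¹ *ᵥ g) - θt) = -(P *ᵥ (θt - H⁻¹ *ᵥ g)) := by
  rw [mulVec_sub, mulVec_mulVec, mul_sub, mul_one, ← Matrix.mul_assoc,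
    mul_nonsing_inv H hH, Matrix.one_mul, sub_mulVec, mulVec_sub H θt,
    mulVec_mulVec, mul_nonsing_inv H hH, one_mulVec]
  abel

end Matrix

section Selection

variable {d : ℕ} (S : Finset (Fin d))

@[simp]
theorem selMat_mulVec_apply (v : Fin d → ℝ) (i : {i // i ∈ S}) : (selMat S *ᵥ v) i = v i := by
  simp [selMat, mulVec, dotProduct, ite_mul]

@[simp]
theorem vecMul_selMat_apply (x : {i // i ∈ S} → ℝ) (i : {i // i ∈ S}) :
    (x ᵥ* selMat S) i = x i := by
  simp [selMat, vecMul, dotProduct, mul_ite]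

theorem selMat_mulVec_eq_zero_iff (v : Fin d → ℝ) : selMat S *ᵥ v = 0 ↔ ∀ i ∈ S, v i = 0 := by
  simp [funext_iff]

theorem vecMul_selMat_injective : Function.Injective (vecMul · (selMat S)) := fun x y hxy => by
  funext i
  simpa using congrFun hxy i

theorem Matrix.PosDef.selMat_mul_mul_transpose {H : Matrix (Fin d) (Fin d) ℝ} (hH : H.PosDef) :
    (selMat S * H * (selMat S)ᵀ).PosDef := by
  simpa [conjTranspose_eq_transpose_of_trivial] using
    hH.mul_mul_conjTranspose_same (vecMul_selMat_injective S)

theorem selMat_mul_inv_mul_HmatS {H : Matrix (Fin d) (Fin d) ℝ} (hH : H.PosDef) :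
    selMat S * (H⁻¹ * HmatS H S) = selMat S := by
  have hB : IsUnit (selMat S * H⁻¹ * (selMat S)ᵀ).det :=
    (hH.inv.selMat_mul_mul_transpose S).det_pos.ne'.isUnit
  rw [HmatS, ← Matrix.mul_assoc, ← Matrix.mul_assoc, ← Matrix.mul_assoc,
    Matrix.mul_assoc _ _ (selMat S), mul_nonsing_inv_cancel_left _ _ hB]

theorem HmatS_mulVec_dotProduct_eq_zero (H : Matrix (Fin d) (Fin d) ℝ) (w : Fin d → ℝ)
    {δ : Fin d → ℝ} (hδ : selMat S *ᵥ δ = 0) : HmatS H S *ᵥ w ⬝ᵥ δ = 0 := by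
  rw [HmatS, Matrix.mul_assoc, ← mulVec_mulVec, mulVec_transpose, ← dotProduct_mulVec, hδ,
    dotProduct_zero]

end Selection

/-- The unique minimizer of `θ ↦ ⟨g, θ − θ_t⟩ + ½⟨θ − θ_t, H(θ − θ_t)⟩` over
`{θ : θ_i = 0 for i ∈ S}` is `θ*_S = (I − H⁻¹H^S)(θ_t − H⁻¹g)`. -/
theorem iobs_fixed_mask_minimizer {d : ℕ} (H : Matrix (Fin d) (Fin d) ℝ) (hH : H.PosDef)
    (S : Finset (Fin d)) (g θt θS : Fin d → ℝ)
    (hθS : θS = ((1 : Matrix (Fin d) (Fin d) ℝ) - H⁻¹ * HmatS H S).mulVec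
      (θt - H⁻¹.mulVec g)) :
    (∀ i ∈ S, θS i = 0) ∧
      ∀ θ : Fin d → ℝ, (∀ i ∈ S, θ i = 0) → θ ≠ θS →
        g ⬝ᵥ (θS - θt) + (1 / 2) * ((θS - θt) ⬝ᵥ H.mulVec (θS - θt)) <
          g ⬝ᵥ (θ - θt) + (1 / 2) * ((θ - θt) ⬝ᵥ H.mulVec (θ - θt)) := by
  have hfeasible : selMat S *ᵥ θS = 0 := by
    rw [hθS, mulVec_mulVec, Matrix.mul_sub, Matrix.mul_one, selMat_mul_inv_mul_HmatS S hH,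
      sub_self, zero_mulVec]
  have hθS_zero := (selMat_mulVec_eq_zero_iff S θS).1 hfeasible
  refine ⟨hθS_zero, fun θ hθ hne => ?_⟩
  have hgrad : g + H *ᵥ (θS - θt) = -(HmatS H S *ᵥ (θt - H⁻¹ *ᵥ g)) := by
    rw [hθS]
    exact add_mulVec_one_sub_inv_mul_mulVec_sub hH.det_pos.ne'.isUnit _ g θt
  have hdir : selMat S *ᵥ (θ - θS) = 0 :=
    (selMat_mulVec_eq_zero_iff S _).2 fun i hi => by simp [hθ i hi, hθS_zero i hi]
  have horth : (g + H *ᵥ (θS - θt)) ⬝ᵥ (θ - θS) = 0 := by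
    rw [hgrad, neg_dotProduct, HmatS_mulVec_dotProduct_eq_zero S H _ hdir, neg_zero]
  simpa only [sub_add_sub_cancel'] using hH.quadratic_lt_add (sub_ne_zero.2 hne) horth
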